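/- arXiv:1605.02943 — 6 statements merged into one kernel-verified Lean document; each statement's English description precedes it below -/
import Mathlib

section
/- For every real n > 0 and any two probability measures μ₁, μ₂ on the Borel σ-field of ℝ, there exists a probability measure ν on ℝ such that for all real u, R_{2n}(u; ν) = R_n(u; μ₁) · R_n(u; μ₂). -/
/-!
Let `V` have the beta prime law `v ^ (a - 1) (1 + v) ^ (-(a + b)) / Beta(a, b) dv` on `(0, ∞)`
and let `X ∼ μ₁`, `Y ∼ μ₂`, `V` be independent. With `A = 1 - i u X` and `B = 1 - i u Y`,
`1 - i u (X + V Y) / (1 + V) = (A + V B) / (1 + V)`, and the Beta integral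
`∫₀^∞ v ^ (a - 1) (A + v B) ^ (-(a + b)) dv = Beta(a, b) A ^ (-b) B ^ (-a)` (for `Re A, Re B > 0`)
turns `R_{a+b}` of the law of `(X + V Y) / (1 + V)` into `R_b(u; μ₁) R_a(u; μ₂)`; take `a = b = n`.

The Beta integral follows by Fubini once `(A + v B) ^ (-(a + b))`, and then `(s B) ^ (-a)`, are
written as Laplace integrals `Γ(p) c ^ (-p) = ∫₀^∞ t ^ (p - 1) e ^ (-c t) dt`. That formula is
known for real `c > 0` and extends to `Re c > 0` by analytic continuation.
-/

open MeasureTheory ProbabilityTheory Filter Topology Set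

/-- The modified Stieltjes transform `R_γ(u; μ) = ∫ (1 - i u x)^(-γ) dμ(x)`
(principal branch of the complex power). -/
noncomputable def stieltjesR (γ : ℝ) (μ : Measure ℝ) (u : ℝ) : ℂ :=
  ∫ x, (1 - (u * x : ℝ) * Complex.I) ^ (-(γ : ℂ)) ∂μ

namespace Complex

lemma ofReal_mul_cpow {r : ℝ} (hr : 0 ≤ r) (z w : ℂ) :
    ((r : ℂ) * z) ^ w = (r : ℂ) ^ w * z ^ w := by
  rcases eq_or_ne w 0 with rfl | hw
  · simp
  rcases hr.eq_or_lt with rfl | hr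
  · simp [zero_cpow hw]
  rcases eq_or_ne z 0 with rfl | hz
  · simp [zero_cpow hw]
  have hr' : (r : ℂ) ≠ 0 := ofReal_ne_zero.2 hr.ne'
  rw [cpow_def_of_ne_zero (mul_ne_zero hr' hz), log_ofReal_mul hr hz, ofReal_log hr.le, add_mul,
    exp_add, ← cpow_def_of_ne_zero hr', ← cpow_def_of_ne_zero hz]

lemma norm_cpow_mul_exp_neg_mul {t : ℝ} (ht : 0 < t) (p c : ℂ) :
    ‖(t : ℂ) ^ (p - 1) * exp (-(c * t))‖ = t ^ (p.re - 1) * Real.exp (-(c.re * t)) := by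
  simp [norm_exp, norm_cpow_eq_rpow_re_of_pos ht]

lemma continuousOn_cpow_mul_exp_neg_mul (p c : ℂ) :
    ContinuousOn (fun t : ℝ => (t : ℂ) ^ (p - 1) * exp (-(c * t))) (Ioi 0) := fun t ht => by
  have : (t : ℂ) ∈ slitPlane := ofReal_mem_slitPlane.2 ht
  fun_prop (disch := assumption)

variable {p c : ℂ}

lemma integrableOn_cpow_mul_exp_neg_mul (hp : 0 < p.re) (hc : 0 < c.re) :
    IntegrableOn (fun t : ℝ => (t : ℂ) ^ (p - 1) * exp (-(c * t))) (Ioi 0) := by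
  refine ⟨(continuousOn_cpow_mul_exp_neg_mul p c).aestronglyMeasurable measurableSet_Ioi, ?_⟩
  refine ((integrableOn_rpow_mul_exp_neg_mul_rpow (s := p.re - 1) (by linarith) one_pos hc
    ).hasFiniteIntegral).mono' ?_
  filter_upwards [ae_restrict_mem measurableSet_Ioi] with t ht
  rw [norm_cpow_mul_exp_neg_mul ht]
  simp

lemma differentiableOn_integral_cpow_mul_exp_neg_mul (hp : 0 < p.re) :
    DifferentiableOn ℂ (fun c : ℂ => ∫ t in Ioi (0 : ℝ), (t : ℂ) ^ (p - 1) * exp (-(c * t)))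
      {c | 0 < c.re} := by
  intro c (hc : 0 < c.re)
  have hderiv : ∀ t : ℝ, ∀ x : ℂ, HasDerivAt (fun y : ℂ => (t : ℂ) ^ (p - 1) * exp (-(y * t)))
      ((t : ℂ) ^ (p - 1) * exp (-(x * t)) * -t) x := fun t x => by
    simpa [mul_assoc] using
      (((hasDerivAt_id x).mul_const (t : ℂ)).neg.cexp).const_mul ((t : ℂ) ^ (p - 1))
  have hbound : ∀ᵐ (t : ℝ) ∂volume.restrict (Ioi 0), ∀ x ∈ Metric.ball c (c.re / 2),
      ‖(t : ℂ) ^ (p - 1) * exp (-(x * t)) * -t‖ ≤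
        ‖(t : ℂ) ^ (p + 1 - 1) * exp (-((c.re / 2 : ℝ) * t))‖ := by
    filter_upwards [ae_restrict_mem measurableSet_Ioi] with t (ht : 0 < t) x hx
    have hx : c.re / 2 ≤ x.re := by
      have := (abs_re_le_norm (x - c)).trans (mem_ball_iff_norm.1 hx).le
      rw [sub_re, abs_le] at this
      linarith
    rw [norm_mul, norm_cpow_mul_exp_neg_mul ht, norm_cpow_mul_exp_neg_mul ht, norm_neg, norm_real,
      Real.norm_of_nonneg ht.le, ofReal_re, add_re, one_re, add_sub_cancel_right,
      mul_right_comm, ← Real.rpow_add_one ht.ne', sub_add_cancel]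
    gcongr
  have hp1 : 0 < (p + 1).re := by rw [add_re, one_re]; linarith
  have hc2 : 0 < ((c.re / 2 : ℝ) : ℂ).re := by simpa using half_pos hc
  exact (hasDerivAt_integral_of_dominated_loc_of_deriv_le (Metric.ball_mem_nhds c (half_pos hc))
    (.of_forall fun x =>
      (continuousOn_cpow_mul_exp_neg_mul p x).aestronglyMeasurable measurableSet_Ioi)
    (integrableOn_cpow_mul_exp_neg_mul hp hc)
    (((continuousOn_cpow_mul_exp_neg_mul p c).mul (by fun_prop)).aestronglyMeasurable
      measurableSet_Ioi)
    hbound (integrableOn_cpow_mul_exp_neg_mul hp1 hc2).norm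
    (ae_of_all _ fun t x _ => hderiv t x)).2.differentiableAt.differentiableWithinAt

theorem integral_cpow_mul_exp_neg_mul_Ioi_of_re_pos (hp : 0 < p.re) (hc : 0 < c.re) :
    ∫ t in Ioi (0 : ℝ), (t : ℂ) ^ (p - 1) * exp (-(c * t)) = Gamma p * c ^ (-p) := by
  have hU : IsOpen {c : ℂ | 0 < c.re} := isOpen_lt continuous_const continuous_re
  refine AnalyticOnNhd.eqOn_of_preconnected_of_frequently_eq (z₀ := 1)
    (f := fun c : ℂ => ∫ t in Ioi (0 : ℝ), (t : ℂ) ^ (p - 1) * exp (-(c * t)))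
    (g := fun c : ℂ => Gamma p * c ^ (-p))
    ((differentiableOn_integral_cpow_mul_exp_neg_mul hp).analyticOnNhd hU)
    (DifferentiableOn.analyticOnNhd (fun z hz => ?_) hU)
    (convex_halfSpace_re_gt 0).isPreconnected (by simp) ?_ hc
  · exact ((differentiableAt_id.cpow_const (f := id) (c := -p) (Or.inl hz)).const_mul
      _).differentiableWithinAt
  -- both sides agree on the positive real axis, which accumulates at `1`
  have hreal : Tendsto ((↑) : ℝ → ℂ) (𝓝[≠] 1) (𝓝[≠] 1) :=
    tendsto_nhdsWithin_of_tendsto_nhds_of_eventually_within _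
      (continuous_ofReal.tendsto' 1 1 ofReal_one |>.mono_left nhdsWithin_le_nhds)
      (eventually_nhdsWithin_of_forall fun r hr => by simpa using hr)
  refine hreal.frequently (Eventually.frequently ?_)
  filter_upwards [nhdsWithin_le_nhds (eventually_gt_nhds one_pos)] with r hr
  rw [integral_cpow_mul_exp_neg_mul_Ioi hp hr, one_div, inv_cpow_ofReal_nonneg hr.le,
    cpow_neg, mul_comm]

end Complex

section BetaIntegral

open Complex

/-- Integrating out `s` gives `Γ(a + b) v ^ (a - 1) (A + v B) ^ (-(a + b))`; integrating out `v`
gives `Γ(a) B ^ (-a) s ^ (b - 1) e ^ (-A s)`. -/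
noncomputable def betaLaplaceKernel (a b A B : ℂ) (s v : ℝ) : ℂ :=
  (v : ℂ) ^ (a - 1) * ((s : ℂ) ^ (a + b - 1) * exp (-((A + v * B) * s)))

lemma betaLaplaceKernel_eq (a b A B : ℂ) (s v : ℝ) :
    betaLaplaceKernel a b A B s v =
      (s : ℂ) ^ (a + b - 1) * exp (-(A * s)) * ((v : ℂ) ^ (a - 1) * exp (-(s * B * v))) := by
  have : exp (-((A + v * B) * s)) = exp (-(A * s)) * exp (-(s * B * v)) := by
    rw [← exp_add]; ring_nf
  rw [betaLaplaceKernel, this]; ring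

variable {a b A B : ℂ}

lemma integrable_betaLaplaceKernel (ha : 0 < a.re) (hb : 0 < b.re) (hA : 0 < A.re)
    (hB : 0 < B.re) :
    Integrable (Function.uncurry (betaLaplaceKernel a b A B))
      ((volume.restrict (Ioi 0)).prod (volume.restrict (Ioi 0))) := by
  have hmeas : AEStronglyMeasurable (Function.uncurry (betaLaplaceKernel a b A B))
      ((volume.restrict (Ioi 0)).prod (volume.restrict (Ioi 0))) := by
    rw [Measure.prod_restrict]
    refine ContinuousOn.aestronglyMeasurable (fun q hq => ?_)
      (measurableSet_Ioi.prod measurableSet_Ioi)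
    have h1 : (q.1 : ℂ) ∈ slitPlane := ofReal_mem_slitPlane.2 hq.1
    have h2 : (q.2 : ℂ) ∈ slitPlane := ofReal_mem_slitPlane.2 hq.2
    refine ContinuousAt.continuousWithinAt
      (f := fun q : ℝ × ℝ => betaLaplaceKernel a b A B q.1 q.2) ?_
    unfold betaLaplaceKernel
    fun_prop (disch := assumption)
  have hsB : ∀ s : ℝ, 0 < s → 0 < ((s : ℂ) * B).re := fun s hs => by simpa using mul_pos hs hB
  refine (integrable_prod_iff hmeas).2 ⟨?_, ?_⟩
  · filter_upwards [ae_restrict_mem measurableSet_Ioi] with s (hs : 0 < s)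
    simp only [Function.uncurry_apply_pair, betaLaplaceKernel_eq]
    exact (integrableOn_cpow_mul_exp_neg_mul ha (hsB s hs)).const_mul _
  have hnorm : ∀ s : ℝ, 0 < s → ∫ v in Ioi (0 : ℝ), ‖betaLaplaceKernel a b A B s v‖ =
      (1 / B.re) ^ a.re * Real.Gamma a.re * ‖(s : ℂ) ^ (b - 1) * exp (-(A * s))‖ := by
    intro s hs
    simp_rw [betaLaplaceKernel_eq, norm_mul ((s : ℂ) ^ (a + b - 1) * exp (-(A * s))),
      integral_const_mul]
    rw [setIntegral_congr_fun measurableSet_Ioi fun v (hv : 0 < v) =>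
      norm_cpow_mul_exp_neg_mul hv a (s * B), Real.integral_rpow_mul_exp_neg_mul_Ioi ha (hsB s hs),
      ← mul_assoc, norm_cpow_mul_exp_neg_mul hs, norm_cpow_mul_exp_neg_mul hs]
    have : ((s : ℂ) * B).re = s * B.re := by simp
    have hsa : s ^ a.re ≠ 0 := by positivity
    rw [this, add_re, show a.re + b.re - 1 = b.re - 1 + a.re by ring, Real.rpow_add hs, one_div,
      mul_inv, Real.mul_rpow (inv_nonneg.2 hs.le) (inv_nonneg.2 hB.le), Real.inv_rpow hs.le]
    field_simp
  refine (((integrableOn_cpow_mul_exp_neg_mul hb hA).norm.const_mul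
    ((1 / B.re) ^ a.re * Real.Gamma a.re))).congr ?_
  filter_upwards [ae_restrict_mem measurableSet_Ioi] with s (hs : 0 < s)
  exact (hnorm s hs).symm

theorem integral_cpow_mul_add_mul_cpow_Ioi (ha : 0 < a.re) (hb : 0 < b.re) (hA : 0 < A.re)
    (hB : 0 < B.re) :
    ∫ v in Ioi (0 : ℝ), (v : ℂ) ^ (a - 1) * (A + v * B) ^ (-(a + b)) =
      Gamma a * Gamma b / Gamma (a + b) * A ^ (-b) * B ^ (-a) := by
  have hab : 0 < (a + b).re := by simp only [add_re]; positivity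
  have hΓ := Gamma_ne_zero_of_re_pos hab
  have hintegrate_s : ∀ v : ℝ, 0 < v → (v : ℂ) ^ (a - 1) * (A + v * B) ^ (-(a + b)) =
      (Gamma (a + b))⁻¹ * ∫ s in Ioi (0 : ℝ), betaLaplaceKernel a b A B s v := fun v hv => by
    have hre : 0 < (A + v * B).re := by simp only [add_re, re_ofReal_mul]; positivity
    simp_rw [betaLaplaceKernel, integral_const_mul,
      integral_cpow_mul_exp_neg_mul_Ioi_of_re_pos hab hre]
    field_simp
  have hintegrate_v : ∀ s : ℝ, 0 < s → ∫ v in Ioi (0 : ℝ), betaLaplaceKernel a b A B s v =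
      Gamma a * B ^ (-a) * ((s : ℂ) ^ (b - 1) * exp (-(A * s))) := fun s hs => by
    have hre : 0 < ((s : ℂ) * B).re := by simpa using mul_pos hs hB
    have hs' : (s : ℂ) ≠ 0 := ofReal_ne_zero.2 hs.ne'
    simp_rw [betaLaplaceKernel_eq, integral_const_mul,
      integral_cpow_mul_exp_neg_mul_Ioi_of_re_pos ha hre, ofReal_mul_cpow hs.le]
    rw [show b - 1 = (a + b - 1) + -a by ring, cpow_add _ _ hs']
    ring
  calc ∫ v in Ioi (0 : ℝ), (v : ℂ) ^ (a - 1) * (A + v * B) ^ (-(a + b))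
      = (Gamma (a + b))⁻¹ *
          ∫ v in Ioi (0 : ℝ), ∫ s in Ioi (0 : ℝ), betaLaplaceKernel a b A B s v := by
        rw [← integral_const_mul]
        exact setIntegral_congr_fun measurableSet_Ioi hintegrate_s
    _ = (Gamma (a + b))⁻¹ *
          ∫ s in Ioi (0 : ℝ), ∫ v in Ioi (0 : ℝ), betaLaplaceKernel a b A B s v := by
        rw [integral_integral_swap (integrable_betaLaplaceKernel ha hb hA hB)]
    _ = (Gamma (a + b))⁻¹ *
          ∫ s in Ioi (0 : ℝ), Gamma a * B ^ (-a) * ((s : ℂ) ^ (b - 1) * exp (-(A * s))) := by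
        rw [setIntegral_congr_fun measurableSet_Ioi hintegrate_v]
    _ = Gamma a * Gamma b / Gamma (a + b) * A ^ (-b) * B ^ (-a) := by
        rw [integral_const_mul, integral_cpow_mul_exp_neg_mul_Ioi_of_re_pos hb hA]
        ring

end BetaIntegral

section BetaPrime

variable {a b : ℝ}

noncomputable def betaPrimeMeasure (a b : ℝ) : Measure ℝ :=
  (volume.restrict (Ioi 0)).withDensity fun v =>
    ENNReal.ofReal (v ^ (a - 1) * (1 + v) ^ (-(a + b)) / beta a b)

lemma ae_pos_betaPrimeMeasure (a b : ℝ) : ∀ᵐ v ∂betaPrimeMeasure a b, 0 < v :=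
  (withDensity_absolutelyContinuous _ _).ae_le (ae_restrict_mem measurableSet_Ioi)

theorem integral_betaPrimeMeasure_cpow (ha : 0 < a) (hb : 0 < b) {A B : ℂ} (hA : 0 < A.re)
    (hB : 0 < B.re) :
    ∫ v, (((1 + v)⁻¹ : ℝ) * (A + v * B)) ^ (-((a + b : ℝ) : ℂ)) ∂betaPrimeMeasure a b =
      A ^ (-(b : ℂ)) * B ^ (-(a : ℂ)) := by
  have hβ := beta_pos ha hb
  rw [betaPrimeMeasure, integral_withDensity_eq_integral_toReal_smul (by fun_prop)
    (ae_of_all _ fun _ => ENNReal.ofReal_lt_top)]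
  have hpt : ∀ v : ℝ, 0 < v →
      (ENNReal.ofReal (v ^ (a - 1) * (1 + v) ^ (-(a + b)) / beta a b)).toReal •
        (((1 + v)⁻¹ : ℝ) * (A + v * B)) ^ (-((a + b : ℝ) : ℂ)) =
      (beta a b : ℂ)⁻¹ * ((v : ℂ) ^ ((a : ℂ) - 1) * (A + v * B) ^ (-((a : ℂ) + b))) := by
    intro v hv
    have h1v : 0 < 1 + v := by linarith
    have hcancel : v ^ (a - 1) * (1 + v) ^ (-(a + b)) / beta a b * (1 + v)⁻¹ ^ (-(a + b)) =
        (beta a b)⁻¹ * v ^ (a - 1) := by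
      rw [div_mul_eq_mul_div, mul_assoc, Real.inv_rpow h1v.le, ← Real.rpow_neg h1v.le,
        ← Real.rpow_add h1v, neg_neg, neg_add_cancel, Real.rpow_zero, mul_one, div_eq_inv_mul]
    rw [ENNReal.toReal_ofReal (by positivity), Complex.real_smul,
      Complex.ofReal_mul_cpow (by positivity), ← Complex.ofReal_neg,
      ← Complex.ofReal_cpow (by positivity), ← mul_assoc, ← Complex.ofReal_mul, hcancel,
      show (a : ℂ) - 1 = ((a - 1 : ℝ) : ℂ) by push_cast; ring, ← Complex.ofReal_cpow hv.le]
    push_cast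
    ring
  rw [setIntegral_congr_fun measurableSet_Ioi hpt, integral_const_mul,
    integral_cpow_mul_add_mul_cpow_Ioi (by simpa) (by simpa) hA hB, ← Complex.ofReal_add,
    Complex.Gamma_ofReal, Complex.Gamma_ofReal, Complex.Gamma_ofReal, beta]
  have hΓa : (Real.Gamma a : ℂ) ≠ 0 := Complex.ofReal_ne_zero.2 (Real.Gamma_pos_of_pos ha).ne'
  have hΓb : (Real.Gamma b : ℂ) ≠ 0 := Complex.ofReal_ne_zero.2 (Real.Gamma_pos_of_pos hb).ne'
  have hΓab : (Real.Gamma (a + b) : ℂ) ≠ 0 :=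
    Complex.ofReal_ne_zero.2 (Real.Gamma_pos_of_pos (add_pos ha hb)).ne'
  push_cast
  field_simp

lemma isProbabilityMeasure_betaPrimeMeasure (ha : 0 < a) (hb : 0 < b) :
    IsProbabilityMeasure (betaPrimeMeasure a b) := by
  -- the total mass is the case `A = B = 1` of the mixing identity
  have h := integral_betaPrimeMeasure_cpow ha hb (A := 1) (B := 1) (by simp) (by simp)
  rw [Complex.one_cpow, Complex.one_cpow, mul_one,
    integral_congr_ae ((ae_pos_betaPrimeMeasure a b).mono fun v (hv : 0 < v) => ?_),
    integral_const, Complex.real_smul, mul_one, Complex.ofReal_eq_one, measureReal_def,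
    ENNReal.toReal_eq_one_iff] at h
  · exact ⟨h⟩
  rw [mul_one, ← Complex.ofReal_one, ← Complex.ofReal_add, ← Complex.ofReal_mul,
    inv_mul_cancel₀ (by positivity), Complex.ofReal_one, Complex.one_cpow]

end BetaPrime

section Stieltjes

open Complex

lemma norm_one_sub_mul_I_cpow_neg_le_one {γ : ℝ} (hγ : 0 ≤ γ) (r : ℝ) :
    ‖(1 - (r : ℂ) * I) ^ (-(γ : ℂ))‖ ≤ 1 := by
  rw [← ofReal_neg, norm_cpow_real]
  refine Real.rpow_le_one_of_one_le_of_nonpos ?_ (neg_nonpos.2 hγ)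
  simpa using abs_re_le_norm (1 - (r : ℂ) * I)

lemma one_sub_ofReal_mul_I_mix {u x y v : ℝ} (hv : 0 < v) :
    1 - ((u * ((x + v * y) / (1 + v)) : ℝ) : ℂ) * I =
      ((1 + v)⁻¹ : ℝ) * ((1 - ((u * x : ℝ) : ℂ) * I) + v * (1 - ((u * y : ℝ) : ℂ) * I)) := by
  have : (1 : ℂ) + v ≠ 0 := by exact_mod_cast (by positivity : (1 : ℝ) + v ≠ 0)
  push_cast
  field_simp
  ring

noncomputable def betaPrimeMixture (a b : ℝ) (μ₁ μ₂ : Measure ℝ) : Measure ℝ :=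
  ((μ₁.prod μ₂).prod (betaPrimeMeasure a b)).map fun q => (q.1.1 + q.2 * q.1.2) / (1 + q.2)

variable {a b : ℝ} {μ₁ μ₂ : Measure ℝ}

lemma isProbabilityMeasure_betaPrimeMixture (ha : 0 < a) (hb : 0 < b) [IsProbabilityMeasure μ₁]
    [IsProbabilityMeasure μ₂] : IsProbabilityMeasure (betaPrimeMixture a b μ₁ μ₂) :=
  have := isProbabilityMeasure_betaPrimeMeasure ha hb
  Measure.isProbabilityMeasure_map (by fun_prop)

theorem stieltjesR_betaPrimeMixture (ha : 0 < a) (hb : 0 < b) [IsFiniteMeasure μ₁]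
    [IsFiniteMeasure μ₂] (u : ℝ) :
    stieltjesR (a + b) (betaPrimeMixture a b μ₁ μ₂) u = stieltjesR b μ₁ u * stieltjesR a μ₂ u := by
  have := isProbabilityMeasure_betaPrimeMeasure ha hb
  have hre : ∀ x : ℝ, 0 < (1 - ((u * x : ℝ) : ℂ) * I).re := fun x => by simp
  have hinner : ∀ x y : ℝ,
      ∫ v, (1 - ((u * ((x + v * y) / (1 + v)) : ℝ) : ℂ) * I) ^ (-((a + b : ℝ) : ℂ))
        ∂betaPrimeMeasure a b =
      (1 - ((u * x : ℝ) : ℂ) * I) ^ (-(b : ℂ)) * (1 - ((u * y : ℝ) : ℂ) * I) ^ (-(a : ℂ)) := by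
    intro x y
    rw [← integral_betaPrimeMeasure_cpow ha hb (hre x) (hre y)]
    exact integral_congr_ae ((ae_pos_betaPrimeMeasure a b).mono fun v hv => by
      dsimp only; rw [one_sub_ofReal_mul_I_mix hv])
  rw [stieltjesR, betaPrimeMixture,
    integral_map (by fun_prop) (Measurable.aestronglyMeasurable (by fun_prop)),
    integral_prod _ (.of_bound (Measurable.aestronglyMeasurable (by fun_prop)) 1
      (ae_of_all _ fun _ => norm_one_sub_mul_I_cpow_neg_le_one (add_pos ha hb).le _))]
  simp_rw [hinner]
  exact integral_prod_mul (fun x : ℝ => (1 - ((u * x : ℝ) : ℂ) * I) ^ (-(b : ℂ)))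
    (fun y : ℝ => (1 - ((u * y : ℝ) : ℂ) * I) ^ (-(a : ℂ)))

end Stieltjes

/-- For every real `n > 0` and probability measures `μ₁, μ₂` on ℝ there is a probability
measure `ν` with `R_{2n}(u; ν) = R_n(u; μ₁) · R_n(u; μ₂)` for all real `u`. -/
theorem exists_nTwoN_convolution (n : ℝ) (hn : 0 < n)
    (μ₁ μ₂ : Measure ℝ) [IsProbabilityMeasure μ₁] [IsProbabilityMeasure μ₂] :
    ∃ ν : Measure ℝ, IsProbabilityMeasure ν ∧
      ∀ u : ℝ, stieltjesR (2 * n) ν u = stieltjesR n μ₁ u * stieltjesR n μ₂ u :=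
  ⟨betaPrimeMixture n n μ₁ μ₂, isProbabilityMeasure_betaPrimeMixture hn hn, fun u => by
    rw [two_mul, stieltjesR_betaPrimeMixture hn hn]⟩
end

section
/- For every real n > 0, every natural number m, and all real a, b, the following identity of finite sums holds: Σ_{k=0}^{m} C(m,k) · (n)_k (n)_{m-k} / (2n)_m · a^k b^{m-k} = Σ_{j=0}^{m} C(m,j) · (n)_j / (2n)_j · (a-b)^j b^{m-j}, where (s)_j = s(s+1)⋯(s+j-1) is the rising factorial with (s)_0 = 1. -/
open MeasureTheory ProbabilityTheory Filter Topology Set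

/-- The Beta function `B(a,b) = Γ(a)Γ(b)/Γ(a+b)`. -/
noncomputable def betaFun (a b : ℝ) : ℝ := Real.Gamma a * Real.Gamma b / Real.Gamma (a + b)

/-- The Beta(a,b) distribution on (0,1), with density `x^(a-1)(1-x)^(b-1)/B(a,b)`
on `(0,1)` and zero elsewhere. -/
noncomputable def betaMeasure (a b : ℝ) : Measure ℝ :=
  MeasureTheory.volume.withDensity fun x =>
    ENNReal.ofReal (if x ∈ Set.Ioo (0 : ℝ) 1 then
      x ^ (a - 1) * (1 - x) ^ (b - 1) / betaFun a b else 0)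

/-- The rising factorial (Pochhammer symbol) `(s)_j = s(s+1)⋯(s+j-1)`, `(s)_0 = 1`. -/
noncomputable def risingFac (s : ℝ) (j : ℕ) : ℝ := ∏ i ∈ Finset.range j, (s + i)

/-- The `β̃_{A,B}(α,β)` distribution on `(A,B)`, with density
`(x-A)^(α-1)(B-x)^(β-1)/(B(α,β)(B-A)^(α+β-1))` on `(A,B)` and zero elsewhere. -/
noncomputable def tildeBetaMeasure (A B α β : ℝ) : Measure ℝ :=
  MeasureTheory.volume.withDensity fun x =>
    ENNReal.ofReal (if x ∈ Set.Ioo A B then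
      (x - A) ^ (α - 1) * (B - x) ^ (β - 1) / (betaFun α β * (B - A) ^ (α + β - 1)) else 0)

/-! Write `a = (a - b) + b` and expand each `a ^ k` binomially. After exchanging the sums, the
coefficient of `(a - b) ^ j * b ^ (m - j)` is `∑ₖ C(m,k) C(k,j) (n)ₖ (n)₍ₘ₋ₖ₎ / (2n)ₘ`. The identity
`C(m,k) C(k,j) = C(m,j) C(m-j,k-j)` and the Chu–Vandermonde identity for rising factorials collapse
the numerator to `C(m,j) (n)ⱼ (2n+j)₍ₘ₋ⱼ₎`, and `(2n)ₘ = (2n)ⱼ (2n+j)₍ₘ₋ⱼ₎`. -/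

open Finset

theorem risingFac_succ (s : ℝ) (j : ℕ) : risingFac s (j + 1) = risingFac s j * (s + j) :=
  prod_range_succ _ _

theorem risingFac_add (s : ℝ) (p q : ℕ) :
    risingFac s (p + q) = risingFac s p * risingFac (s + p) q := by
  simp only [risingFac, prod_range_add, Nat.cast_add, add_assoc]

theorem risingFac_pos {s : ℝ} (hs : 0 < s) (j : ℕ) : 0 < risingFac s j :=
  prod_pos fun i _ => by positivity

theorem sum_antidiagonal_choose_mul_risingFac (x y : ℝ) (M : ℕ) :
    ∑ ij ∈ antidiagonal M, (M.choose ij.1 : ℝ) * (risingFac x ij.1 * risingFac y ij.2) =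
      risingFac (x + y) M := by
  induction M with
  | zero => simp [risingFac]
  | succ M ih =>
    rw [sum_antidiagonal_choose_succ_mul (fun i j => risingFac x i * risingFac y j),
      ← sum_add_distrib, risingFac_succ, ← ih, sum_mul]
    refine sum_congr rfl fun ⟨i, j⟩ hij => ?_
    rw [HasAntidiagonal.mem_antidiagonal] at hij
    rw [← Nat.choose_symm_of_eq_add hij.symm, risingFac_succ, risingFac_succ, ← hij]
    push_cast
    ring

theorem sum_choose_mul_choose_mul_risingFac (x y : ℝ) {j m : ℕ} (hj : j ≤ m) :
    ∑ k ∈ range (m + 1), (m.choose k : ℝ) * k.choose j * (risingFac x k * risingFac y (m - k)) =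
      m.choose j * risingFac x j * risingFac (x + j + y) (m - j) := by
  obtain ⟨M, rfl⟩ := Nat.exists_eq_add_of_le hj
  rw [add_assoc, sum_range_add, Nat.add_sub_cancel_left,
    ← sum_antidiagonal_choose_mul_risingFac, Nat.sum_antidiagonal_eq_sum_range_succ_mk,
    sum_eq_zero fun k hk => by simp [Nat.choose_eq_zero_of_lt (Finset.mem_range.1 hk)], zero_add,
    mul_sum]
  refine sum_congr rfl fun i _ => ?_
  have hchoose :
      ((j + M).choose (j + i) : ℝ) * (j + i).choose j = (j + M).choose j * M.choose i := by
    exact_mod_cast by simpa using Nat.choose_mul (n := j + M) (Nat.le_add_right j i)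
  rw [Nat.add_sub_add_left, risingFac_add, hchoose]
  ring

theorem pow_mul_pow_sub_eq_sum_choose_mul_sub_pow {R : Type*} [CommRing R] (a b : R) {k m : ℕ}
    (hk : k ≤ m) :
    a ^ k * b ^ (m - k) = ∑ j ∈ range (m + 1), (k.choose j : R) * (a - b) ^ j * b ^ (m - j) := by
  calc a ^ k * b ^ (m - k)
      = ∑ j ∈ range (k + 1), (k.choose j : R) * (a - b) ^ j * b ^ (m - j) := by
        conv_lhs => rw [← sub_add_cancel a b, add_pow, sum_mul]
        refine sum_congr rfl fun j hj => ?_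
        have hpow : b ^ (m - j) = b ^ (k - j) * b ^ (m - k) := by
          rw [← pow_add]
          congr 1
          have := mem_range_succ_iff.1 hj
          omega
        rw [hpow]
        ring
    _ = _ := sum_subset (range_subset_range.2 (by omega)) fun j _ hjk => by
        rw [Finset.mem_range, not_lt] at hjk
        simp [Nat.choose_eq_zero_of_lt hjk]

theorem sum_mul_pow_mul_pow_eq_sum_sub_pow {R : Type*} [CommRing R] (c : ℕ → R) (a b : R)
    (m : ℕ) :
    ∑ k ∈ range (m + 1), c k * a ^ k * b ^ (m - k) =
      ∑ j ∈ range (m + 1), (∑ k ∈ range (m + 1), c k * k.choose j) * (a - b) ^ j * b ^ (m - j) := by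
  calc ∑ k ∈ range (m + 1), c k * a ^ k * b ^ (m - k)
      = ∑ k ∈ range (m + 1), ∑ j ∈ range (m + 1), c k * (k.choose j * (a - b) ^ j * b ^ (m - j)) :=
        sum_congr rfl fun k hk => by
          rw [mul_assoc, pow_mul_pow_sub_eq_sum_choose_mul_sub_pow a b (mem_range_succ_iff.1 hk),
            mul_sum]
    _ = _ := by
        rw [sum_comm]
        refine sum_congr rfl fun j _ => ?_
        rw [sum_mul, sum_mul]
        exact sum_congr rfl fun k _ => by ring

theorem sum_choose_mul_risingFac_div_mul_choose {x y : ℝ} (hxy : 0 < x + y) {j m : ℕ}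
    (hj : j ≤ m) :
    ∑ k ∈ range (m + 1), (m.choose k : ℝ) * (risingFac x k * risingFac y (m - k)) /
        risingFac (x + y) m * k.choose j =
      m.choose j * risingFac x j / risingFac (x + y) j := by
  have hsplit : risingFac (x + y) m = risingFac (x + y) j * risingFac (x + y + j) (m - j) := by
    rw [← risingFac_add, Nat.add_sub_cancel' hj]
  have h₁ := (risingFac_pos hxy j).ne'
  have h₂ := (risingFac_pos (by positivity : 0 < x + y + j) (m - j)).ne'
  calc ∑ k ∈ range (m + 1), (m.choose k : ℝ) * (risingFac x k * risingFac y (m - k)) /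
          risingFac (x + y) m * k.choose j
      = (∑ k ∈ range (m + 1),
          (m.choose k : ℝ) * k.choose j * (risingFac x k * risingFac y (m - k))) /
            risingFac (x + y) m := by
        rw [sum_div]
        exact sum_congr rfl fun k _ => by ring
    _ = m.choose j * risingFac x j * risingFac (x + y + j) (m - j) /
          (risingFac (x + y) j * risingFac (x + y + j) (m - j)) := by
        rw [sum_choose_mul_choose_mul_risingFac x y hj, hsplit, add_right_comm]
    _ = _ := by field_simp

/-- For real `n > 0`, `m : ℕ` and reals `a, b`:
`Σ_{k=0}^m C(m,k) (n)_k (n)_{m-k} / (2n)_m a^k b^{m-k}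
  = Σ_{j=0}^m C(m,j) (n)_j / (2n)_j (a-b)^j b^{m-j}`. -/
theorem moment_sum_hypergeometric_form (n : ℝ) (hn : 0 < n) (m : ℕ) (a b : ℝ) :
    ∑ k ∈ Finset.range (m + 1),
        (m.choose k : ℝ) * (risingFac n k * risingFac n (m - k)) / risingFac (2 * n) m *
          a ^ k * b ^ (m - k) =
      ∑ j ∈ Finset.range (m + 1),
        (m.choose j : ℝ) * risingFac n j / risingFac (2 * n) j * (a - b) ^ j * b ^ (m - j) := by
  rw [sum_mul_pow_mul_pow_eq_sum_sub_pow
    (fun k => (m.choose k : ℝ) * (risingFac n k * risingFac n (m - k)) / risingFac (2 * n) m)]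
  refine sum_congr rfl fun j hj => ?_
  rw [two_mul, sum_choose_mul_risingFac_div_mul_choose (by positivity) (mem_range_succ_iff.1 hj)]
end

section
/- Let μ be a probability measure on the Borel subsets of ℝ and fix u ∈ ℝ. Then lim_{γ → ∞} ∫_ℝ (1 - i (u/γ) x)^{-γ} dμ(x) = ∫_ℝ e^{iux} dμ(x), where the limit is taken as the real parameter γ tends to +∞. -/
open MeasureTheory ProbabilityTheory Filter Topology Set

/-!
Pointwise, `(1 - i u x / γ)^{-γ} → e^{iux}` is the compound-interest limit `(1 + t/γ)^γ → e^t`.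
Since `Re (1 - i s) = 1`, the integrand has norm at most `1` once `γ ≥ 0`, so dominated
convergence with a constant bound applies.
-/

namespace Complex

lemma tendsto_one_sub_div_cpow_neg_exp (t : ℂ) :
    Tendsto (fun x : ℝ ↦ (1 - t / x) ^ (-(x : ℂ))) atTop (𝓝 (exp t)) := by
  have h := (tendsto_one_add_div_cpow_exp (-t)).inv₀ (exp_ne_zero _)
  simp only [exp_neg, inv_inv, neg_div, ← sub_eq_add_neg] at h
  simpa only [cpow_neg] using h

lemma norm_one_sub_mul_I_cpow_neg_le_one (s : ℝ) {γ : ℝ} (hγ : 0 ≤ γ) :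
    ‖(1 - s * I) ^ (-(γ : ℂ))‖ ≤ 1 := by
  have h_one_le : 1 ≤ ‖1 - s * I‖ := by
    simpa using abs_re_le_norm (1 - s * I)
  rw [← ofReal_neg, norm_cpow_real]
  exact Real.rpow_le_one_of_one_le_of_nonpos h_one_le (neg_nonpos.mpr hγ)

end Complex

/-- For a probability measure `μ` on ℝ and fixed `u : ℝ`,
`∫ (1 - i(u/γ)x)^{-γ} dμ(x) → ∫ e^{iux} dμ(x)` as `γ → +∞`. -/
theorem stieltjesR_tendsto_fourier (μ : Measure ℝ) [IsProbabilityMeasure μ] (u : ℝ) :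
    Tendsto (fun γ : ℝ => ∫ x, (1 - (u / γ * x : ℝ) * Complex.I) ^ (-(γ : ℂ)) ∂μ)
      atTop (𝓝 (∫ x, Complex.exp ((u * x : ℝ) * Complex.I) ∂μ)) := by
  refine tendsto_integral_filter_of_dominated_convergence (fun _ ↦ 1) ?_ ?_
    (integrable_const 1) ?_
  · exact .of_forall fun γ ↦ (by fun_prop : Measurable _).aestronglyMeasurable
  · filter_upwards [eventually_ge_atTop 0] with γ hγ
    exact .of_forall fun x ↦ Complex.norm_one_sub_mul_I_cpow_neg_le_one _ hγ
  · refine .of_forall fun x ↦ ?_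
    convert Complex.tendsto_one_sub_div_cpow_neg_exp ((u * x : ℝ) * Complex.I) using 3 with γ
    push_cast
    ring
end

section
/- Let μ be a probability measure on the Borel subsets of ℝ, fix u ∈ ℝ, and assume the function x ↦ Log(1 - iux) is μ-integrable (Log the principal complex logarithm). Then lim_{γ → 0⁺} (R_γ(u; μ) - 1)/γ = ∫_ℝ log(1/(1 - iux)) dμ(x) = -∫_ℝ Log(1 - iux) dμ(x). -/
open MeasureTheory ProbabilityTheory Filter Topology Set

/-
The integrand `(1 - iux)^{-γ} = exp(-γ Log(1 - iux))` has `Re Log(1 - iux) ≥ 0`, because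
`|1 - iux| ≥ 1`. On the half-plane `Re w ≤ 0` the exponential is 1-Lipschitz, so the difference
quotients `((1 - iux)^{-γ} - 1)/γ` are dominated by `|Log(1 - iux)|` for all `γ > 0`, and they
converge pointwise to `-Log(1 - iux)`. Dominated convergence finishes the proof.
-/

namespace Complex

lemma norm_exp_sub_one_le_norm_of_re_nonpos {w : ℂ} (hw : w.re ≤ 0) :
    ‖exp w - 1‖ ≤ ‖w‖ := by
  have hderiv_le : ∀ z ∈ {z : ℂ | z.re ≤ 0},
      ‖((1 : ℂ →L[ℂ] ℂ).smulRight (exp z)).restrictScalars ℝ‖ ≤ 1 := by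
    intro z hz
    rw [ContinuousLinearMap.norm_restrictScalars, ContinuousLinearMap.norm_smulRight_apply,
      norm_one, one_mul, norm_exp]
    exact Real.exp_le_one_iff.2 hz
  simpa using (convex_halfSpace_re_le 0).norm_image_sub_le_of_norm_hasFDerivWithin_le
    (fun z _ => ((hasDerivAt_exp z).hasFDerivAt.restrictScalars ℝ).hasFDerivWithinAt)
    hderiv_le (by simp : (0 : ℂ) ∈ {z : ℂ | z.re ≤ 0}) hw

lemma tendsto_exp_mul_sub_one_div (w : ℂ) :
    Tendsto (fun t : ℝ => (exp (t * w) - 1) / t) (𝓝[≠] 0) (𝓝 w) := by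
  have hderiv : HasDerivAt (fun t : ℝ => exp (t * w)) w 0 := by
    simpa using ((hasDerivAt_id (0 : ℝ)).ofReal_comp.mul_const w).cexp
  refine (hasDerivAt_iff_tendsto_slope.1 hderiv).congr fun t => ?_
  simp [slope_def_module, real_smul, div_eq_inv_mul]

lemma re_log_nonneg_of_one_le_norm {z : ℂ} (hz : 1 ≤ ‖z‖) : 0 ≤ (log z).re := by
  rw [log_re]
  exact Real.log_nonneg hz

lemma one_sub_ofReal_mul_I_re (x : ℝ) : (1 - x * I).re = 1 := by simp

lemma re_log_one_sub_ofReal_mul_I_nonneg (x : ℝ) : 0 ≤ (log (1 - x * I)).re :=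
  re_log_nonneg_of_one_le_norm <| by
    simpa [one_sub_ofReal_mul_I_re] using abs_re_le_norm (1 - x * I)

lemma one_sub_ofReal_mul_I_cpow_neg (x γ : ℝ) :
    (1 - x * I) ^ (-(γ : ℂ)) = exp (-(γ * log (1 - x * I))) := by
  have hne : (1 - x * I) ≠ 0 := fun h => by simpa [h] using one_sub_ofReal_mul_I_re x
  rw [cpow_def_of_ne_zero hne, mul_neg, mul_comm]

end Complex

open Complex in
lemma tendsto_integral_exp_neg_mul_sub_one_div {α : Type*} [MeasurableSpace α] {μ : Measure α}
    {L : α → ℂ} (hL : Integrable L μ) (hre : ∀ᵐ x ∂μ, 0 ≤ (L x).re) :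
    Tendsto (fun γ : ℝ => ∫ x, (exp (-(γ * L x)) - 1) / γ ∂μ) (𝓝[>] 0)
      (𝓝 (-∫ x, L x ∂μ)) := by
  rw [← integral_neg]
  refine tendsto_integral_filter_of_dominated_convergence (fun x => ‖L x‖) ?_ ?_ hL.norm ?_
  · refine .of_forall fun γ => ?_
    have := hL.aestronglyMeasurable
    fun_prop
  · filter_upwards [self_mem_nhdsWithin] with γ (hγ : 0 < γ)
    filter_upwards [hre] with x hx
    have hexp := norm_exp_sub_one_le_norm_of_re_nonpos (w := -(γ * L x))
      (by simpa using mul_nonneg hγ.le hx)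
    rw [norm_div, norm_real, Real.norm_of_nonneg hγ.le, div_le_iff₀' hγ]
    simpa [norm_mul, abs_of_pos hγ] using hexp
  · refine .of_forall fun x => ?_
    refine ((tendsto_exp_mul_sub_one_div (-L x)).mono_left
      (nhdsWithin_mono _ fun t (ht : 0 < t) => ht.ne')).congr fun t => ?_
    rw [mul_neg]

open Complex in
lemma stieltjesR_sub_one_eq_integral {μ : Measure ℝ} [IsProbabilityMeasure μ] (γ u : ℝ) (hγ : 0 ≤ γ) :
    stieltjesR γ μ u - 1 = ∫ x, ((1 - (u * x : ℝ) * I) ^ (-(γ : ℂ)) - 1) ∂μ := by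
  have hcont : Continuous fun x : ℝ => (1 - (u * x : ℝ) * I) ^ (-(γ : ℂ)) := by
    refine .cpow (by fun_prop) continuous_const fun x => ?_
    simp [mem_slitPlane_iff]
  have hint : Integrable (fun x : ℝ => (1 - (u * x : ℝ) * I) ^ (-(γ : ℂ))) μ := by
    refine .mono' (integrable_const (1 : ℝ)) hcont.aestronglyMeasurable (.of_forall fun x => ?_)
    rw [one_sub_ofReal_mul_I_cpow_neg, norm_exp, Real.exp_le_one_iff, neg_re, re_ofReal_mul, neg_nonpos]
    exact mul_nonneg hγ (re_log_one_sub_ofReal_mul_I_nonneg _)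
  rw [integral_sub hint (integrable_const 1)]
  simp [stieltjesR]

/-- If `x ↦ Log(1 - iux)` is `μ`-integrable, then
`(R_γ(u; μ) - 1)/γ → -∫ Log(1 - iux) dμ(x)` as `γ → 0⁺`. -/
theorem stieltjesR_deriv_at_zero (μ : Measure ℝ) [IsProbabilityMeasure μ] (u : ℝ)
    (hInt : Integrable (fun x : ℝ => Complex.log (1 - (u * x : ℝ) * Complex.I)) μ) :
    Tendsto (fun γ : ℝ => (stieltjesR γ μ u - 1) / (γ : ℂ))
      (𝓝[>] 0) (𝓝 (-∫ x, Complex.log (1 - (u * x : ℝ) * Complex.I) ∂μ)) := by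
  refine (tendsto_integral_exp_neg_mul_sub_one_div hInt
    (.of_forall fun x => Complex.re_log_one_sub_ofReal_mul_I_nonneg _)).congr' ?_
  filter_upwards [self_mem_nhdsWithin] with γ (hγ : 0 < γ)
  rw [stieltjesR_sub_one_eq_integral γ u hγ.le, ← integral_div]
  simp only [Complex.one_sub_ofReal_mul_I_cpow_neg]
end

section
/- Let μ be a probability measure on ℝ whose support is contained in the interval [-M, M] for some M > 0, let γ > 0, and let u ∈ ℝ satisfy |u| · M < 1. Then the modified Stieltjes transform admits the convergent series expansion R_γ(u; μ) = Σ_{k=0}^{∞} ((γ)_k / k!) · (iu)^k · κ_k(μ), where κ_k(μ) = ∫_ℝ x^k dμ(x) is the k-th moment of μ and (γ)_k = γ(γ+1)⋯(γ+k-1) with (γ)_0 = 1. -/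
open MeasureTheory ProbabilityTheory Filter Topology Set

open scoped Nat

lemma risingFac_eq_ascPochhammer_eval (s : ℝ) (k : ℕ) :
    risingFac s k = (ascPochhammer ℝ k).eval s := by
  induction k with
  | zero => simp [risingFac]
  | succ k ih => rw [risingFac, Finset.prod_range_succ, ← risingFac, ih, ascPochhammer_succ_eval]

lemma risingFac_div_factorial_eq_choose (s : ℝ) (k : ℕ) :
    risingFac s k / k ! = Ring.choose (s + k - 1) k := by
  rw [← Ring.multichoose_eq, div_eq_iff (by positivity), mul_comm, ← nsmul_eq_mul,
    Ring.factorial_nsmul_multichoose_eq_ascPochhammer, Polynomial.ascPochhammer_smeval_eq_eval,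
    risingFac_eq_ascPochhammer_eval]

theorem hasFPowerSeriesOnBall_one_sub_cpow_neg (s : ℝ) :
    HasFPowerSeriesOnBall (fun z : ℂ => (1 - z) ^ (-(s : ℂ)))
      (.ofScalars ℂ fun k => ((risingFac s k / k ! : ℝ) : ℂ)) 0 1 := by
  have hcoeff : (fun k => ((risingFac s k / k ! : ℝ) : ℂ)) =
      fun k : ℕ => Ring.choose ((s : ℂ) + k - 1) k := by
    ext k
    rw [risingFac_div_factorial_eq_choose]
    push_cast
    rfl
  rw [hcoeff]
  simpa only [Complex.cpow_neg, one_div] using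
    Complex.one_div_one_sub_cpow_hasFPowerSeriesOnBall_zero s

theorem hasSum_risingFac_div_factorial_mul_pow (s : ℝ) {z : ℂ} (hz : ‖z‖ < 1) :
    HasSum (fun k => ((risingFac s k / k ! : ℝ) : ℂ) * z ^ k) ((1 - z) ^ (-(s : ℂ))) := by
  have := (hasFPowerSeriesOnBall_one_sub_cpow_neg s).hasSum
    (y := z) (by simpa [← ENNReal.ofReal_one, Metric.eball_ofReal] using hz)
  simpa only [FormalMultilinearSeries.ofScalars_apply_eq, smul_eq_mul, zero_add] using this

theorem summable_norm_risingFac_div_factorial_mul_pow (s : ℝ) {r : ℝ} (hr₀ : 0 ≤ r)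
    (hr₁ : r < 1) : Summable fun k => ‖((risingFac s k / k ! : ℝ) : ℂ)‖ * r ^ k := by
  lift r to NNReal using hr₀
  have hradius := (hasFPowerSeriesOnBall_one_sub_cpow_neg s).r_le
  have := FormalMultilinearSeries.summable_norm_mul_pow _
    ((ENNReal.coe_lt_one_iff.mpr hr₁).trans_le hradius)
  simpa [FormalMultilinearSeries.ofScalars_norm] using this

theorem hasSum_integral_of_ae_hasSum_mul_pow {μ : Measure ℝ} [IsFiniteMeasure μ] {M : ℝ}
    (hμ : ∀ᵐ x ∂μ, |x| ≤ M) {c : ℕ → ℂ} {w : ℂ}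
    (hc : Summable fun k => ‖c k‖ * (‖w‖ * M) ^ k) {f : ℝ → ℂ}
    (hf : ∀ᵐ x : ℝ ∂μ, HasSum (fun k => c k * (w * x) ^ k) (f x)) :
    HasSum (fun k => c k * w ^ k * ((∫ x, x ^ k ∂μ : ℝ) : ℂ)) (∫ x, f x ∂μ) := by
  set F : ℕ → ℝ → ℂ := fun k x => c k * (w * x) ^ k
  have hF_le : ∀ k, ∀ᵐ x ∂μ, ‖F k x‖ ≤ ‖c k‖ * (‖w‖ * M) ^ k := fun k => by
    filter_upwards [hμ] with x hx
    simp only [F, norm_mul, norm_pow, Complex.norm_real, Real.norm_eq_abs]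
    gcongr
  have hF_int : ∀ k, Integrable (F k) μ := fun k =>
    Integrable.mono' (integrable_const _) (by fun_prop) (hF_le k)
  have hF_norm_le : ∀ k, ∫ x, ‖F k x‖ ∂μ ≤ μ.real univ * (‖c k‖ * (‖w‖ * M) ^ k) := fun k => by
    simpa using integral_mono_ae (hF_int k).norm (integrable_const _) (hF_le k)
  have hsum := hasSum_integral_of_summable_integral_norm hF_int
    ((hc.mul_left _).of_nonneg_of_le (fun k => integral_nonneg fun _ => norm_nonneg _) hF_norm_le)
  rw [integral_congr_ae (hf.mono fun x hx => hx.tsum_eq)] at hsum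
  refine hsum.congr_fun fun k => ?_
  simp only [F, mul_pow, ← mul_assoc, integral_const_mul]
  rw [← integral_complex_ofReal]
  push_cast
  rfl

theorem stieltjesR_series_expansion_general (μ : Measure ℝ) [IsProbabilityMeasure μ]
    (M : ℝ) (hsupp : μ (Set.Icc (-M) M)ᶜ = 0)
    (γ : ℝ) (u : ℝ) (hu : |u| * M < 1) :
    HasSum
      (fun k : ℕ =>
        ((risingFac γ k / k.factorial : ℝ) : ℂ) * ((u : ℂ) * Complex.I) ^ k *
          ((∫ x, x ^ k ∂μ : ℝ) : ℂ))
      (stieltjesR γ μ u) := by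
  have hμ : ∀ᵐ x ∂μ, |x| ≤ M := (ae_iff.mpr hsupp).mono fun x hx => abs_le.mpr hx
  have hM : 0 ≤ M := let ⟨x, hx⟩ := hμ.exists; (abs_nonneg x).trans hx
  have hw : ‖(u : ℂ) * Complex.I‖ = |u| := by simp
  refine hasSum_integral_of_ae_hasSum_mul_pow hμ ?_ ?_
  · rw [hw]
    exact summable_norm_risingFac_div_factorial_mul_pow γ (by positivity) hu
  · filter_upwards [hμ] with x hx
    have hz : ‖((u * x : ℝ) : ℂ) * Complex.I‖ < 1 := by
      simpa [abs_mul] using (mul_le_mul_of_nonneg_left hx (abs_nonneg u)).trans_lt hu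
    convert hasSum_risingFac_div_factorial_mul_pow γ hz using 3 with k
    push_cast
    ring

/-- If `μ` is a probability measure supported in `[-M, M]`, `γ > 0` and `|u| M < 1`,
then `R_γ(u; μ) = Σ_{k=0}^∞ ((γ)_k / k!) (iu)^k κ_k(μ)` as a convergent series,
where `κ_k(μ) = ∫ x^k dμ`. -/
theorem stieltjesR_series_expansion (μ : Measure ℝ) [IsProbabilityMeasure μ]
    (M : ℝ) (hM : 0 < M) (hsupp : μ (Set.Icc (-M) M)ᶜ = 0)
    (γ : ℝ) (hγ : 0 < γ) (u : ℝ) (hu : |u| * M < 1) :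
    HasSum
      (fun k : ℕ =>
        ((risingFac γ k / k.factorial : ℝ) : ℂ) * ((u : ℂ) * Complex.I) ^ k *
          ((∫ x, x ^ k ∂μ : ℝ) : ℂ))
      (stieltjesR γ μ u) :=
  stieltjesR_series_expansion_general μ M hsupp γ u hu
end

section
/- For every real n > 0 the generalized convolution ⋆_n is not associative: with δ_a denoting the Dirac measure at a, one has (δ₁ ⋆_n δ₀) ⋆_n δ₀ ≠ δ₁ ⋆_n (δ₀ ⋆_n δ₀). Concretely, if X₁ and X₂ are independent random variables each with the Beta(n,n) distribution on (0,1), then the law of the product X₁·X₂ is different from the law of X₁ (indeed E[X₁X₂] = 1/4 ≠ 1/2 = E[X₁]). -/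
open MeasureTheory ProbabilityTheory Filter Topology Set

/-- The generalized convolution `μ₁ ⋆_n μ₂`: the law of `U·X + V·(1-X)` where `U, V, X`
are independent with laws `μ₁`, `μ₂` and Beta(n,n) respectively. -/
noncomputable def genConv (n : ℝ) (μ₁ μ₂ : Measure ℝ) : Measure ℝ :=
  Measure.map (fun p : ℝ × ℝ × ℝ => p.1 * p.2.2 + p.2.1 * (1 - p.2.2))
    (μ₁.prod (μ₂.prod (_root_.betaMeasure n n)))

/-!
Since `μ ⋆_n δ₀` is the law of `U·X` with `U ~ μ` and `X ~ Beta(n,n)` independent, convolving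
with `δ₀` on the right is the multiplicative convolution with Beta(n,n). Hence
`δ₁ ⋆_n δ₀ = Beta(n,n)` and `δ₀ ⋆_n δ₀ = δ₀`, so the two bracketings are the laws of `X₁X₂` and
of `X₁`. These differ because their means are `1/4` and `1/2`: the mean of Beta(a,b) is
`a/(a+b)`, which follows from `x · β_{a,b}(x) = a/(a+b) · β_{a+1,b}(x)` for the densities.
-/

namespace ProbabilityTheory

lemma beta_add_one_left {a b : ℝ} (ha : a ≠ 0) (hab : a + b ≠ 0) :
    beta (a + 1) b = a / (a + b) * beta a b := by
  rw [beta, beta, Real.Gamma_add_one ha, add_right_comm, Real.Gamma_add_one hab,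
    mul_assoc, mul_div_mul_comm]

lemma betaPDFReal_nonneg {a b : ℝ} (ha : 0 < a) (hb : 0 < b) (x : ℝ) :
    0 ≤ betaPDFReal a b x := by
  by_cases hx : 0 < x ∧ x < 1
  · exact (betaPDFReal_pos hx.1 hx.2 ha hb).le
  · simp [betaPDFReal, hx]

lemma mul_betaPDFReal {a b : ℝ} (ha : 0 < a) (hb : 0 < b) (x : ℝ) :
    x * betaPDFReal a b x = a / (a + b) * betaPDFReal (a + 1) b x := by
  unfold betaPDFReal
  split_ifs with hx
  · have hβ := (beta_pos ha hb).ne'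
    have hx₀ := hx.1.ne'
    rw [beta_add_one_left ha.ne' (by positivity), add_sub_cancel_right,
      Real.rpow_sub_one hx₀]
    field_simp
  · simp

lemma integral_betaPDFReal {a b : ℝ} (ha : 0 < a) (hb : 0 < b) :
    ∫ x, betaPDFReal a b x = 1 := by
  rw [integral_eq_lintegral_of_nonneg_ae (.of_forall (betaPDFReal_nonneg ha hb))
    (measurable_betaPDFReal a b).aestronglyMeasurable]
  simp [← betaPDF.eq_def, lintegral_betaPDF_eq_one ha hb]

lemma integral_betaMeasure {E : Type*} [NormedAddCommGroup E] [NormedSpace ℝ E]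
    {a b : ℝ} (ha : 0 < a) (hb : 0 < b) (f : ℝ → E) :
    ∫ x, f x ∂betaMeasure a b = ∫ x, betaPDFReal a b x • f x := by
  rw [betaMeasure, integral_withDensity_eq_integral_toReal_smul (f := betaPDF a b)
    (measurable_betaPDFReal a b).ennreal_ofReal (.of_forall fun _ => ENNReal.ofReal_lt_top)]
  simp only [betaPDF, ENNReal.toReal_ofReal (betaPDFReal_nonneg ha hb _)]

lemma integral_id_betaMeasure {a b : ℝ} (ha : 0 < a) (hb : 0 < b) :
    ∫ x, x ∂betaMeasure a b = a / (a + b) := by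
  simp only [integral_betaMeasure ha hb, smul_eq_mul, mul_comm (betaPDFReal a b _),
    mul_betaPDFReal ha hb, integral_const_mul]
  rw [integral_betaPDFReal (by linarith) hb, mul_one]

instance instSFiniteBetaMeasure (a b : ℝ) : SFinite (betaMeasure a b) := by
  unfold betaMeasure; infer_instance

end ProbabilityTheory

lemma betaMeasure_eq_probabilityTheory_betaMeasure (a b : ℝ) :
    _root_.betaMeasure a b = ProbabilityTheory.betaMeasure a b := by
  unfold _root_.betaMeasure ProbabilityTheory.betaMeasure betaPDF betaPDFReal
  congr with x
  congr 1
  simp only [mem_Ioo, betaFun, beta]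
  split_ifs <;> ring

lemma genConv_dirac_zero_right (n : ℝ) (μ : Measure ℝ) [SFinite μ] :
    genConv n μ (Measure.dirac 0) = μ ∗ₘ ProbabilityTheory.betaMeasure n n := by
  rw [genConv, betaMeasure_eq_probabilityTheory_betaMeasure, Measure.dirac_prod,
    ← Measure.map_id (μ := μ), Measure.map_prod_map _ _ measurable_id measurable_prodMk_left,
    Measure.map_map (by fun_prop) (by fun_prop), Measure.map_id, Measure.mconv]
  congr with p
  simp

lemma genConv_dirac_one_dirac_zero (n : ℝ) :
    genConv n (Measure.dirac 1) (Measure.dirac 0) = ProbabilityTheory.betaMeasure n n := by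
  rw [genConv_dirac_zero_right, Measure.dirac_one_mconv]

lemma genConv_dirac_zero_dirac_zero {n : ℝ} (hn : 0 < n) :
    genConv n (Measure.dirac 0) (Measure.dirac 0) = Measure.dirac 0 := by
  have := isProbabilityMeasureBeta hn hn
  simp [genConv_dirac_zero_right, Measure.dirac_mconv, Measure.map_const]

/-- For every `n > 0` the generalized convolution `⋆_n` is not associative:
`(δ₁ ⋆_n δ₀) ⋆_n δ₀ ≠ δ₁ ⋆_n (δ₀ ⋆_n δ₀)`. Concretely, if `X₁, X₂` are independent
Beta(n,n) random variables, the law of `X₁·X₂` differs from the law of `X₁`, with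
`E[X₁X₂] = 1/4 ≠ 1/2 = E[X₁]`. -/
theorem genConv_not_associative (n : ℝ) (hn : 0 < n)
    {Ω : Type*} [MeasureSpace Ω] [IsProbabilityMeasure (ℙ : Measure Ω)]
    (X₁ X₂ : Ω → ℝ) (hX₁ : Measurable X₁) (hX₂ : Measurable X₂)
    (hIndep : IndepFun X₁ X₂ ℙ)
    (hX₁law : Measure.map X₁ ℙ = _root_.betaMeasure n n)
    (hX₂law : Measure.map X₂ ℙ = _root_.betaMeasure n n) :
    genConv n (genConv n (Measure.dirac 1) (Measure.dirac 0)) (Measure.dirac 0) ≠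
        genConv n (Measure.dirac 1) (genConv n (Measure.dirac 0) (Measure.dirac 0)) ∧
      Measure.map (fun ω => X₁ ω * X₂ ω) ℙ ≠ Measure.map X₁ ℙ ∧
      (∫ ω, X₁ ω * X₂ ω ∂ℙ) = 1 / 4 ∧ (∫ ω, X₁ ω ∂ℙ) = 1 / 2 := by
  rw [betaMeasure_eq_probabilityTheory_betaMeasure] at hX₁law hX₂law
  have := isProbabilityMeasureBeta hn hn
  have hmean : ∫ x, x ∂ProbabilityTheory.betaMeasure n n = 1 / 2 := by
    rw [integral_id_betaMeasure hn hn]; field_simp; ring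
  have hmean₁ : ∫ ω, X₁ ω ∂ℙ = 1 / 2 :=
    (HasLaw.integral_eq ⟨hX₁.aemeasurable, hX₁law⟩).trans hmean
  have hmean₂ : ∫ ω, X₂ ω ∂ℙ = 1 / 2 :=
    (HasLaw.integral_eq ⟨hX₂.aemeasurable, hX₂law⟩).trans hmean
  have hmean₁₂ : ∫ ω, X₁ ω * X₂ ω ∂ℙ = 1 / 4 := by
    rw [hIndep.integral_fun_mul_eq_mul_integral hX₁.aestronglyMeasurable
      hX₂.aestronglyMeasurable, hmean₁, hmean₂]
    norm_num
  have hlaw_ne : Measure.map (fun ω => X₁ ω * X₂ ω) ℙ ≠ Measure.map X₁ ℙ := by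
    intro h
    have := (HasLaw.integral_eq ⟨(hX₁.mul hX₂).aemeasurable, h.trans hX₁law⟩).trans hmean
    norm_num [Pi.mul_apply, hmean₁₂] at this
  have hlaw_mul : Measure.map (fun ω => X₁ ω * X₂ ω) ℙ =
      ProbabilityTheory.betaMeasure n n ∗ₘ ProbabilityTheory.betaMeasure n n :=
    (hIndep.map_mul_eq_map_mconv_map hX₁ hX₂).trans (by rw [hX₁law, hX₂law])
  refine ⟨?_, hlaw_ne, hmean₁₂, hmean₁⟩
  rwa [genConv_dirac_zero_dirac_zero hn, genConv_dirac_one_dirac_zero, genConv_dirac_zero_right,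
    ← hlaw_mul, ← hX₁law]
end
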